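/- arXiv:1712.10216 — 4 statements merged into one kernel-verified Lean document; each statement's English description precedes it below -/
import Mathlib

section
/- Let $R$ be a Noetherian commutative ring, let $U \subseteq \operatorname{Spec} R$ be a dense open subset (for the Zariski topology), and let $\mathfrak{p}$ be a prime ideal of $R$ with $\mathfrak{p} \notin U$. Then there exists a prime ideal $\mathfrak{q} \in U$ with $\mathfrak{q} \subsetneq \mathfrak{p}$ such that there is no prime ideal $\mathfrak{r}$ with $\mathfrak{q} \subsetneq \mathfrak{r} \subsetneq \mathfrak{p}$. -/
/-!
Among the points of `U` generizing `p` choose a maximal one, `q`; there is one because a dense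
open subset of a Noetherian space contains the generic point of every irreducible component.
A basic open `D(g) ⊆ U` around `q` shows that every prime `t` with `q < t ≤ p` contains `g`.
If a prime sat strictly between `q` and `p`, Krull's principal ideal theorem (applied in `R ⧸ q`)
would rule out `p` among the finitely many primes minimal over `q + (g)`, so prime avoidance
gives `y ∈ p` lying outside `q` and outside each of them. A prime `Q ≤ p` minimal over `q + (y)`
contains `g`, hence contains a prime minimal over `q + (g)`, which by Krull again is `Q` itself:
a contradiction, since it does not contain `y`.
-/

open TopologicalSpace PrimeSpectrum

theorem Dense.genericPoints_subset {X : Type*} [TopologicalSpace X] [NoetherianSpace X]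
    {U : Set X} (hU : Dense U) (hUo : IsOpen U) : genericPoints X ⊆ U := by
  intro x hx
  obtain ⟨o, ho, hne, hoZ⟩ :=
    NoetherianSpace.exists_isOpen_nonempty_subset_irreducibleComponent _ hx
  obtain ⟨y, hyo, hyU⟩ := hU.inter_open_nonempty o ho hne
  exact (specializes_iff_mem_closure.mpr (hoZ hyo)).mem_open hUo hyU

theorem PrimeSpectrum.exists_mem_le_of_dense {R : Type*} [CommRing R] [IsNoetherianRing R]
    {U : Set (PrimeSpectrum R)} (hU : Dense U) (hUo : IsOpen U) (p : PrimeSpectrum R) :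
    ∃ q ∈ U, q ≤ p := by
  obtain ⟨q, hq, hqp⟩ := Ideal.exists_minimalPrimes_le (bot_le : ⊥ ≤ p.asIdeal)
  refine ⟨⟨q, hq.1.1⟩, hU.genericPoints_subset hUo ?_, hqp⟩
  rw [genericPoints, Set.mem_ofPred_eq, closure_singleton,
    zeroLocus_ideal_mem_irreducibleComponents, hq.1.1.radical]
  exact hq

instance PrimeSpectrum.wellFoundedGT {R : Type*} [CommRing R] [IsNoetherianRing R] :
    WellFoundedGT (PrimeSpectrum R) :=
  ⟨(wellFounded_gt (α := Ideal R)).onFun⟩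

namespace Ideal

variable {R : Type*} [CommRing R]

theorem map_mk_lt_map_mk {q I J : Ideal R} (hI : q ≤ I) (hIJ : I < J) :
    I.map (Quotient.mk q) < J.map (Quotient.mk q) := by
  refine (map_mono hIJ.le).lt_of_not_ge fun h ↦ hIJ.not_ge ?_
  have hJ : q ≤ J := hI.trans hIJ.le
  simpa [comap_map_of_surjective _ Quotient.mk_surjective, ← RingHom.ker_eq_comap_bot, mk_ker,
    hI, hJ] using comap_mono (f := Quotient.mk q) h

theorem not_lt_of_mem_minimalPrimes_sup_span_singleton [IsNoetherianRing R]
    {q r t : Ideal R} [q.IsPrime] [r.IsPrime] {x : R}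
    (ht : t ∈ (q ⊔ span {x}).minimalPrimes) (hqr : q < r) : ¬ r < t := by
  -- In `R ⧸ q` the chain `⊥ < r/q < t/q` contradicts Krull's bound `height (t/q) ≤ 1`.
  intro hrt
  have : t.IsPrime := ht.1.1
  have : (r.map (Quotient.mk q)).IsPrime :=
    map_isPrime_of_surjective Quotient.mk_surjective (by simpa using hqr.le)
  have : (t.map (Quotient.mk q)).IsPrime :=
    map_isPrime_of_surjective Quotient.mk_surjective (by simpa using hqr.le.trans hrt.le)
  have hbot : ⊥ < r.map (Quotient.mk q) := by
    simpa [map_quotient_self] using map_mk_lt_map_mk le_rfl hqr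
  have h₁ := height_add_one_le_of_lt_of_isPrime hbot
  have h₂ := height_add_one_le_of_lt_of_isPrime (map_mk_lt_map_mk hqr.le hrt)
  have h₃ := map_height_le_one_of_mem_minimalPrimes ht
  have : (1 : ℕ∞) + 1 ≤ 1 :=
    calc (1 : ℕ∞) + 1 ≤ (⊥ : Ideal (R ⧸ q)).height + 1 + 1 := by gcongr; exact le_add_self
      _ ≤ _ := by gcongr
      _ ≤ 1 := h₂.trans h₃
  exact absurd this (by decide)

theorem exists_mem_forall_notMem_of_finite {S : Set (Ideal R)}
    (hS : S.Finite) (hprime : ∀ t ∈ S, t.IsPrime) {I : Ideal R} (hI : ∀ t ∈ S, ¬ I ≤ t) :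
    ∃ y ∈ I, ∀ t ∈ S, y ∉ t := by
  by_contra! h
  obtain ⟨t, ht, hIt⟩ := (subset_union_prime_finite hS (f := id) ⊥ ⊥
    (fun t ht _ _ ↦ hprime t ht)).mp fun y hy ↦ by simpa using h y hy
  exact hI t ht hIt

theorem not_lt_of_notMem_of_forall_mem [IsNoetherianRing R] {q p r : Ideal R} [q.IsPrime]
    [p.IsPrime] [r.IsPrime] {g : R} (hgq : g ∉ q)
    (hg : ∀ t : Ideal R, t.IsPrime → q < t → t ≤ p → g ∈ t)
    (hqr : q < r) : ¬ r < p := by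
  intro hrp
  let S := insert q {t ∈ (q ⊔ span {g}).minimalPrimes | t ≤ p}
  have hS : S.Finite := by
    refine .insert _ (Set.Finite.subset ?_ fun t ht ↦ ht.1)
    rw [minimalPrimes_eq_comap]
    exact (minimalPrimes.finite_of_isNoetherianRing _).image _
  have hSprime : ∀ t ∈ S, t.IsPrime := by
    rintro t (rfl | ht)
    exacts [inferInstance, ht.1.1.1]
  have hpS : ∀ t ∈ S, ¬ p ≤ t := by
    rintro t (rfl | ⟨ht, htp⟩) hpt
    · exact (hqr.trans hrp).not_ge hpt
    · exact not_lt_of_mem_minimalPrimes_sup_span_singleton ht hqr (hrp.trans_le hpt)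
  obtain ⟨y, hyp, hyS⟩ := exists_mem_forall_notMem_of_finite hS hSprime hpS
  obtain ⟨Q, hQ, hQp⟩ := exists_minimalPrimes_le
    (sup_le (hqr.trans hrp).le ((span_singleton_le_iff_mem _).mpr hyp))
  have : Q.IsPrime := hQ.1.1
  have hyQ : y ∈ Q := hQ.1.2 (mem_sup_right (mem_span_singleton_self y))
  have hqQ : q < Q :=
    (le_sup_left.trans hQ.1.2).lt_of_ne fun h ↦ hyS q (Set.mem_insert q _) (h ▸ hyQ)
  obtain ⟨t, ht, htQ⟩ := exists_minimalPrimes_le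
    (sup_le hqQ.le ((span_singleton_le_iff_mem _).mpr (hg Q this hqQ hQp)))
  have : t.IsPrime := ht.1.1
  have hqt : q < t := (le_sup_left.trans ht.1.2).lt_of_ne fun h ↦
    hgq (h ▸ ht.1.2 (mem_sup_right (mem_span_singleton_self g)))
  have htQ : t = Q := htQ.eq_of_not_lt (not_lt_of_mem_minimalPrimes_sup_span_singleton hQ hqt)
  exact hyS t (Or.inr ⟨ht, htQ ▸ hQp⟩) (htQ ▸ hyQ)

end Ideal

/-- Let `R` be a Noetherian commutative ring, `U ⊆ Spec R` a dense open
subset, and `p ∉ U` a prime ideal. Then there exists a prime ideal `q ∈ U` with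
`q ⊊ p` such that there is no prime ideal `r` with `q ⊊ r ⊊ p`. -/
theorem stmt1 (R : Type*) [CommRing R] [IsNoetherianRing R]
    (U : Set (PrimeSpectrum R)) (hUopen : IsOpen U) (hUdense : Dense U)
    (p : PrimeSpectrum R) (hp : p ∉ U) :
    ∃ q ∈ U, q.asIdeal < p.asIdeal ∧
      ∀ r : PrimeSpectrum R, ¬ (q.asIdeal < r.asIdeal ∧ r.asIdeal < p.asIdeal) := by
  obtain ⟨q, hmax⟩ := WellFoundedGT.exists_maximal inferInstance {q ∈ U | q ≤ p}
    (exists_mem_le_of_dense hUdense hUopen p)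
  have hqU : q ∈ U := hmax.prop.1
  have hqp : q < p := hmax.prop.2.lt_of_ne (by rintro rfl; exact hp hqU)
  obtain ⟨_, ⟨g, rfl⟩, hqg, hgU⟩ :=
    isTopologicalBasis_basic_opens.exists_subset_of_mem_open hqU hUopen
  refine ⟨q, hqU, hqp, fun r ⟨hqr, hrp⟩ ↦
    Ideal.not_lt_of_notMem_of_forall_mem hqg ?_ hqr hrp⟩
  intro t ht hqt htp
  by_contra hgt
  exact hmax.not_prop_of_gt (show q < ⟨t, ht⟩ from hqt) ⟨hgU hgt, htp⟩
end

section
/- Let $R$ be a Noetherian local commutative ring whose Krull dimension is strictly greater than $1$. Then the set of prime ideals of $R$ of height exactly $1$ is infinite. -/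
/-!
If only finitely many primes below `p` had height one, then together with the finitely many
minimal primes they would form a finite family of primes, none containing `p` since
`height p ≥ 2`. Prime avoidance gives `x ∈ p` outside all of them, and a minimal prime of `(x)`
inside `p` has height at most one by Krull's principal ideal theorem, so it belongs to the
family although it contains `x`.
-/

open Order

namespace PrimeSpectrum

variable {R : Type*} [CommRing R]

lemma exists_mem_notMem_of_finite {s : Set (PrimeSpectrum R)} (hs : s.Finite)
    (p : PrimeSpectrum R) (hp : ∀ q ∈ s, ¬p ≤ q) : ∃ x ∈ p.asIdeal, ∀ q ∈ s, x ∉ q.asIdeal := by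
  have : ¬(p.asIdeal : Set R) ⊆ ⋃ q ∈ s, q.asIdeal := by
    rw [Ideal.subset_union_prime_finite hs p p fun q _ _ _ ↦ q.isPrime]
    exact fun ⟨q, hq, hpq⟩ ↦ hp q hq hpq
  simpa [Set.not_subset] using this

variable [IsNoetherianRing R]

lemma exists_le_height_le_one_of_mem (p : PrimeSpectrum R) {x : R} (hx : x ∈ p.asIdeal) :
    ∃ q ≤ p, x ∈ q.asIdeal ∧ height q ≤ 1 := by
  obtain ⟨Q, hQ, hQp⟩ :=
    Ideal.exists_minimalPrimes_le ((Ideal.span_singleton_le_iff_mem _).mpr hx)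
  have := hQ.isPrime
  refine ⟨⟨Q, this⟩, hQp, hQ.1.2 (Ideal.mem_span_singleton_self x), ?_⟩
  rw [← height_eq_orderHeight]
  exact Ideal.height_le_one_of_isPrincipal_of_mem_minimalPrimes _ Q hQ

theorem infinite_setOf_le_and_height_eq_one_of_two_le_height {p : PrimeSpectrum R}
    (hp : 2 ≤ height p) :
    {q | q ≤ p ∧ height q = 1}.Infinite := by
  intro hfin
  set T := {q | q ≤ p ∧ height q ≤ 1}
  have hT : T.Finite := by
    refine ((finite_setOfPred_isMin R).union hfin).subset fun q ⟨hqp, hq⟩ ↦ ?_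
    rcases hq.lt_or_eq with hq | hq
    · exact Or.inl (height_eq_zero.mp (Order.lt_one_iff.mp hq))
    · exact Or.inr ⟨hqp, hq⟩
  have hpT : ∀ q ∈ T, ¬p ≤ q := fun q ⟨hqp, hq⟩ hpq ↦
    absurd (hp.trans (le_antisymm hqp hpq ▸ hq)) (by decide)
  obtain ⟨x, hxp, hxT⟩ := exists_mem_notMem_of_finite hT p hpT
  obtain ⟨q, hqp, hxq, hq⟩ := exists_le_height_le_one_of_mem p hxp
  exact hxT q ⟨hqp, hq⟩ hxq

end PrimeSpectrum

theorem stmt3_general (R : Type*) [CommRing R] [IsNoetherianRing R]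
    (h : 1 < ringKrullDim R) :
    {p : PrimeSpectrum R | Order.height p = 1}.Infinite := by
  rw [ringKrullDim, krullDim_eq_iSup_height, lt_iSup_iff] at h
  obtain ⟨p, hp⟩ := h
  have : 2 ≤ height p := Order.add_one_le_of_lt (by exact_mod_cast hp)
  exact (PrimeSpectrum.infinite_setOf_le_and_height_eq_one_of_two_le_height this).mono
    fun q hq ↦ hq.2

/-- Let `R` be a Noetherian local commutative ring of Krull dimension
strictly greater than `1`. Then the set of prime ideals of `R` of height exactly `1`
is infinite. -/
theorem stmt3 (R : Type*) [CommRing R] [IsNoetherianRing R] [IsLocalRing R]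
    (h : 1 < ringKrullDim R) :
    {p : PrimeSpectrum R | Order.height p = 1}.Infinite :=
  stmt3_general R h
end

section
/- Let $f \colon X \to S$ be a morphism of finite type between Noetherian schemes, let $T \subseteq S$ be a locally closed subset, and let $x \in X$ and $t \in T$ be points with $f(x)$ in the closure of $\{t\}$. Then there exist a point $x'$ which is a closed point of $X$ lying in the closure of $\{x\}$, and a point $t' \in T$ lying in the closure of $\{t\}$, such that $f(x')$ lies in the closure of $\{t'\}$ and either $t' = f(x')$ or $t'$ is an immediate generization of $f(x')$. -/
/-!
Take a closed point `x'` in the closure of `x` and put `s = f x'`, so that `t ⤳ s`. Write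
`T = U ∩ C` with `U` open and `C` closed; every specialization of `t` lies in `C`, so if `s ∈ U`
one takes `t' = s`. Otherwise pass to an affine open `Spec R ∋ s` with `R` Noetherian, pick
`a ∈ R` vanishing at `s` with `t ∈ D(a) ⊆ U`, and let `q` be a prime maximal among the primes
between `t` and `s` avoiding `a`. Then no prime lies strictly between `q` and `s`: prime
avoidance would produce `b ∈ s` and a prime minimal over `q + (b)` of height at least two over
`q`, contradicting Krull's principal ideal theorem.
-/

open AlgebraicGeometry Topology

namespace Ideal

variable {R : Type*} [CommRing R] [IsNoetherianRing R]

/-- Krull's principal ideal theorem, relative to a prime `q`. -/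
theorem not_lt_of_mem_minimalPrimes_sup_span_singleton_s4 {q p w : Ideal R} [q.IsPrime]
    [p.IsPrime] {b : R} (hw : w ∈ (q ⊔ span {b}).minimalPrimes) (hqp : q < p) : ¬p < w := by
  intro hpw
  have := hw.isPrime
  let f := Quotient.mk q
  have hf : Function.Surjective f := Quotient.mk_surjective
  have map_lt_map {I J : Ideal R} (hqI : q ≤ I) (hIJ : I < J) : I.map f < J.map f := by
    refine (map_mono hIJ.le).lt_of_ne fun h ↦ hIJ.ne ?_
    have hJ : q ≤ J := hqI.trans hIJ.le
    simpa [comap_map_of_surjective' f hf, f, mk_ker, hqI, hJ] using congrArg (comap f) h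
  have isPrime_map (I : Ideal R) [I.IsPrime] (hqI : q ≤ I) : (I.map f).IsPrime :=
    map_isPrime_of_surjective hf (by rwa [mk_ker])
  have := isPrime_map q le_rfl
  have := isPrime_map p hqp.le
  have := isPrime_map w (hqp.le.trans hpw.le)
  have h₁ := height_add_one_le_of_lt_of_isPrime (map_lt_map le_rfl hqp)
  have h₂ := height_add_one_le_of_lt_of_isPrime (map_lt_map hqp.le hpw)
  have h₃ := map_height_le_one_of_mem_minimalPrimes hw
  have : (q.map f).height + 1 + 1 ≤ 1 := by grw [h₁, h₂, h₃]
  rw [add_assoc] at this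
  exact absurd (le_add_self.trans this) (by norm_num)

/-- Prime avoidance among the minimal primes of `q ⊔ span {a}` yields `b ∈ s`; a prime `w ≤ s`
minimal over `q ⊔ span {b}` would then lie above a chain `q < w₁ < w`. -/
theorem exists_isPrime_notMem_of_lt_of_lt {q z s : Ideal R} [q.IsPrime] [z.IsPrime] [s.IsPrime]
    (hqz : q < z) (hzs : z < s) {a : R} (haq : a ∉ q) :
    ∃ w : Ideal R, w.IsPrime ∧ q < w ∧ w ≤ s ∧ a ∉ w := by
  by_contra! H
  set J := q ⊔ span {a}
  have J_le {w : Ideal R} (hw : w.IsPrime) (hqw : q < w) (hws : w ≤ s) : J ≤ w :=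
    sup_le hqw.le ((span_singleton_le_iff_mem _).mpr (H w hw hqw hws))
  have hJfin := J.finite_minimalPrimes_of_isNoetherianRing R
  obtain ⟨w₀, hw₀, hw₀z⟩ := exists_minimalPrimes_le (J_le inferInstance hqz hzs.le)
  obtain ⟨b, hbs, hbJ⟩ : ∃ b ∈ s, ∀ w ∈ J.minimalPrimes, b ∉ w := by
    by_contra! hcover
    obtain ⟨w, hw, hsw⟩ := (subset_union_prime_finite hJfin ⊥ ⊥ (f := id)
      (fun w hw _ _ ↦ hw.isPrime)).mp fun b hb ↦ by simpa using hcover b hb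
    have hww₀ : w ≤ w₀ := hw.2 hw₀.1 (hw₀z.trans (hzs.le.trans hsw))
    exact hzs.not_ge (hsw.trans (hww₀.trans hw₀z))
  obtain ⟨w, hw, hws⟩ := exists_minimalPrimes_le (sup_le (hqz.le.trans hzs.le)
    ((span_singleton_le_iff_mem _).mpr hbs) : q ⊔ span {b} ≤ s)
  have := hw.isPrime
  have hbw : b ∈ w := hw.1.2 (mem_sup_right (mem_span_singleton_self b))
  have hqw : q < w := (le_sup_left.trans hw.1.2).lt_of_ne
    fun h ↦ hbJ w₀ hw₀ (le_sup_left.trans hw₀.1.2 (h ▸ hbw))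
  obtain ⟨w₁, hw₁, hw₁w⟩ := exists_minimalPrimes_le (J_le this hqw hws)
  have := hw₁.isPrime
  have haw₁ : a ∈ w₁ := hw₁.1.2 (mem_sup_right (mem_span_singleton_self a))
  have hqw₁ : q < w₁ := (le_sup_left.trans hw₁.1.2).lt_of_ne fun h ↦ haq (h ▸ haw₁)
  exact not_lt_of_mem_minimalPrimes_sup_span_singleton_s4 hw hqw₁
    (hw₁w.lt_of_ne fun h ↦ hbJ w₁ hw₁ (h ▸ hbw))

end Ideal

def IsImmediateGeneralization {X : Type*} [TopologicalSpace X] (t s : X) : Prop :=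
  t ⤳ s ∧ t ≠ s ∧ ∀ z, t ⤳ z → z ⤳ s → z = t ∨ z = s

theorem Topology.IsOpenEmbedding.isImmediateGeneralization_iff {X Y : Type*}
    [TopologicalSpace X] [TopologicalSpace Y] {f : X → Y} (hf : IsOpenEmbedding f) {a b : X} :
    IsImmediateGeneralization (f a) (f b) ↔ IsImmediateGeneralization a b := by
  have hspec {c d : X} : f c ⤳ f d ↔ c ⤳ d := hf.isInducing.specializes_iff
  unfold IsImmediateGeneralization
  refine and_congr hspec (and_congr hf.injective.ne_iff
    ⟨fun H c hac hcb ↦ ?_, fun H z haz hzb ↦ ?_⟩)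
  · simpa [hf.injective.eq_iff] using H (f c) (hspec.mpr hac) (hspec.mpr hcb)
  · obtain ⟨c, rfl⟩ : z ∈ Set.range f := hzb.mem_open hf.isOpen_range ⟨b, rfl⟩
    simpa [hf.injective.eq_iff] using H c (hspec.mp haz) (hspec.mp hzb)

namespace PrimeSpectrum

variable {R : Type*} [CommRing R]

theorem exists_le_covBy_of_notMem [IsNoetherianRing R] {p s : PrimeSpectrum R} (hps : p ≤ s)
    {a : R} (has : a ∈ s.asIdeal) (hap : a ∉ p.asIdeal) :
    ∃ q : PrimeSpectrum R, p ≤ q ∧ a ∉ q.asIdeal ∧ q ⋖ s := by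
  obtain ⟨Q, ⟨hQ, hpQ, hQs, haQ⟩, hQmax⟩ := WellFoundedGT.exists_maximal inferInstance
    {I : Ideal R | I.IsPrime ∧ p.asIdeal ≤ I ∧ I ≤ s.asIdeal ∧ a ∉ I}
    ⟨p.asIdeal, p.2, le_rfl, hps, hap⟩
  refine ⟨⟨Q, hQ⟩, hpQ, haQ, hQs.lt_of_ne fun h ↦ haQ (h ▸ has), fun z hQz hzs ↦ ?_⟩
  obtain ⟨w, hw, hQw, hws, haw⟩ := Ideal.exists_isPrime_notMem_of_lt_of_lt hQz hzs haQ
  exact hQw.not_ge (hQmax ⟨hw, hpQ.trans hQw.le, hws, haw⟩ hQw.le)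

theorem isImmediateGeneralization_iff_covBy {p q : PrimeSpectrum R} :
    IsImmediateGeneralization p q ↔ p ⋖ q := by
  simp only [IsImmediateGeneralization, covBy_iff_lt_and_eq_or_eq, lt_iff_le_and_ne,
    ← le_iff_specializes, and_assoc]

theorem exists_specializes_isImmediateGeneralization [IsNoetherianRing R] {t s : PrimeSpectrum R}
    (hts : t ⤳ s) {U : Set (PrimeSpectrum R)} (hU : IsOpen U) (htU : t ∈ U) (hsU : s ∉ U) :
    ∃ t', t ⤳ t' ∧ t' ∈ U ∧ IsImmediateGeneralization t' s := by
  obtain ⟨_, ⟨a, rfl⟩, hta, haU⟩ :=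
    isTopologicalBasis_basic_opens.exists_subset_of_mem_open htU hU
  obtain ⟨q, htq, haq, hqs⟩ := exists_le_covBy_of_notMem ((le_iff_specializes t s).mpr hts)
    (by simpa using mt (@haU s) hsU) (by simpa using hta)
  exact ⟨q, (le_iff_specializes t q).mp htq, haU haq,
    isImmediateGeneralization_iff_covBy.mpr hqs⟩

end PrimeSpectrum

theorem AlgebraicGeometry.Scheme.exists_specializes_isImmediateGeneralization {S : Scheme}
    [IsLocallyNoetherian S] {t s : S} (hts : t ⤳ s) {U : Set S} (hU : IsOpen U) (htU : t ∈ U)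
    (hsU : s ∉ U) : ∃ t', t ⤳ t' ∧ t' ∈ U ∧ IsImmediateGeneralization t' s := by
  obtain ⟨V, hV, hsV, -⟩ := exists_isAffineOpen_mem_and_subset (U := ⊤) (x := s) trivial
  have := IsLocallyNoetherian.component_noetherian ⟨V, hV⟩
  have hφ : IsOpenEmbedding hV.fromSpec := hV.fromSpec.isOpenEmbedding
  have mem_range {y : S} (hy : y ⤳ s) : y ∈ Set.range hV.fromSpec := by
    rw [hV.range_fromSpec]; exact hy.mem_open V.2 hsV
  obtain ⟨t₀, rfl⟩ := mem_range hts
  obtain ⟨s₀, rfl⟩ := mem_range specializes_rfl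
  obtain ⟨q, htq, hqU, hqs⟩ := PrimeSpectrum.exists_specializes_isImmediateGeneralization
    (hφ.isInducing.specializes_iff.mp hts) (hU.preimage hV.fromSpec.continuous) htU hsU
  exact ⟨hV.fromSpec q, hφ.isInducing.specializes_iff.mpr htq, hqU,
    hφ.isImmediateGeneralization_iff.mpr hqs⟩

theorem stmt4_general (X S : Scheme) [IsNoetherian X] [IsNoetherian S] (f : X ⟶ S)
    (T : Set S) (hT : IsLocallyClosed T)
    (x : X) (t : S) (htT : t ∈ T) (hxt : f.base x ∈ closure ({t} : Set S)) :
    ∃ (x' : X) (t' : S), IsClosed ({x'} : Set X) ∧ x' ∈ closure ({x} : Set X) ∧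
      t' ∈ T ∧ t' ∈ closure ({t} : Set S) ∧ f.base x' ∈ closure ({t'} : Set S) ∧
      (t' = f.base x' ∨
        (t' ≠ f.base x' ∧
          ∀ z : S, z ∈ closure ({t'} : Set S) → f.base x' ∈ closure ({z} : Set S) →
            z = t' ∨ z = f.base x')) := by
  simp only [← specializes_iff_mem_closure] at hxt ⊢
  obtain ⟨x', hxx', hx'⟩ := isClosed_closure.exists_closed_singleton
    (closure_nonempty_iff.mpr (Set.singleton_nonempty x))
  have hts : t ⤳ f.base x' := hxt.trans ((specializes_iff_mem_closure.mpr hxx').map f.continuous)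
  obtain ⟨U, C, hU, hC, rfl⟩ := hT
  by_cases hsU : f.base x' ∈ U
  · exact ⟨x', f.base x', hx', specializes_iff_mem_closure.mpr hxx',
      ⟨hsU, hts.mem_closed hC htT.2⟩, hts, specializes_rfl, Or.inl rfl⟩
  obtain ⟨t', htt', ht'U, ht's, hne, hcov⟩ :=
    S.exists_specializes_isImmediateGeneralization hts hU htT.1 hsU
  exact ⟨x', t', hx', specializes_iff_mem_closure.mpr hxx', ⟨ht'U, htt'.mem_closed hC htT.2⟩,
    htt', ht's, Or.inr ⟨hne, hcov⟩⟩

/-- Let `f : X → S` be a morphism of finite type between Noetherian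
schemes, `T ⊆ S` a locally closed subset, and `x ∈ X`, `t ∈ T` points with
`f(x) ∈ closure {t}`. Then there exist a closed point `x'` of `X` lying in the closure of
`{x}` and a point `t' ∈ T` lying in the closure of `{t}` such that `f(x') ∈ closure {t'}`
and either `t' = f(x')` or `t'` is an immediate generization of `f(x')`. -/
theorem stmt4 (X S : Scheme) [IsNoetherian X] [IsNoetherian S] (f : X ⟶ S)
    [LocallyOfFiniteType f] [QuasiCompact f]
    (T : Set S) (hT : IsLocallyClosed T)
    (x : X) (t : S) (htT : t ∈ T) (hxt : f.base x ∈ closure ({t} : Set S)) :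
    ∃ (x' : X) (t' : S), IsClosed ({x'} : Set X) ∧ x' ∈ closure ({x} : Set X) ∧
      t' ∈ T ∧ t' ∈ closure ({t} : Set S) ∧ f.base x' ∈ closure ({t'} : Set S) ∧
      (t' = f.base x' ∨
        (t' ≠ f.base x' ∧
          ∀ z : S, z ∈ closure ({t'} : Set S) → f.base x' ∈ closure ({z} : Set S) →
            z = t' ∨ z = f.base x')) :=
  stmt4_general X S f T hT x t htT hxt
end

section
/- Let $\Lambda$ be a commutative ring with $m\Lambda = 0$ for some integer $m > 0$, let $A$ be a set of prime numbers containing all prime divisors of $m$, and let $G$ be a profinite group with a closed normal subgroup $N$ which is isomorphic as a topological group to $\mathbb{Z}_A = \prod_{\ell \in A} \mathbb{Z}_\ell$. Let $\sigma$ be a topological generator of $N$, let $R = \Lambda[[G]]$ be the completed group ring, and set $t = [\sigma] - 1 \in R$. Then: (i) $t$ is a non-zero-divisor in $R$ (both $tr = 0$ and $rt = 0$ imply $r = 0$); (ii) $tR = Rt$; and (iii) for any other topological generator $\sigma'$ of $N$, one has $([\sigma'] - 1)R = tR$. -/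
/-
At a finite level `Λ[G/H]`, write `s` for the image of `σ` and `ν = ∑_{i < ord s} sⁱ`. Choosing
representatives of the cosets of `⟨s⟩` shows that the kernel of multiplication by `s - 1` is
`ν Λ[G/H]` and that its image is the annihilator of `ν`. Because `N ≅ ℤ_A` and every prime divisor
of `m` lies in `A`, every `H` can be shrunk to `H'` so that `m · ord_{G/H}(σ)` divides
`ord_{G/H'}(σ)`; the transition map then sends `ν` to a multiple of `m`, which is `0`. So the
kernels of `t` form an essentially zero system: `t` is a non-zero-divisor in the inverse limit, and
compatible solutions of `t x = y` can be patched together. Since `N` is normal, `ν` is central,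
which gives `tR = Rt`; since `ν` only depends on the image of `N`, part (iii) follows.
-/

open scoped Pointwise

section CompletedGroupRing

variable (Λ : Type*) [CommRing Λ] (G : Type*) [Group G] [TopologicalSpace G]

/-- The transition ring homomorphism `Λ[G/H] → Λ[G/K]` for open normal subgroups
`H ≤ K` of `G`, induced by the quotient map `G/H → G/K`. -/
noncomputable def cgrTrans {H K : OpenNormalSubgroup G} (h : H.toSubgroup ≤ K.toSubgroup) :
    MonoidAlgebra Λ (G ⧸ H.toSubgroup) →+* MonoidAlgebra Λ (G ⧸ K.toSubgroup) :=
  MonoidAlgebra.mapDomainRingHom Λ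
    (QuotientGroup.map H.toSubgroup K.toSubgroup (MonoidHom.id G)
      (by rwa [Subgroup.comap_id]))

/-- The completed group ring `Λ[[G]] = lim_H Λ[G/H]`, realized as the subring of
compatible families in `∏_H Λ[G/H]`, where `H` runs over the open normal subgroups
of `G`. -/
noncomputable def completedGroupRing :
    Subring (∀ H : OpenNormalSubgroup G, MonoidAlgebra Λ (G ⧸ H.toSubgroup)) where
  carrier := {x | ∀ (H K : OpenNormalSubgroup G) (h : H.toSubgroup ≤ K.toSubgroup),
    cgrTrans Λ G h (x H) = x K}
  zero_mem' := by intro H K h; simp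
  one_mem' := by intro H K h; simp
  add_mem' := by intro a b ha hb H K h; simp only [Pi.add_apply, map_add, ha H K h, hb H K h]
  mul_mem' := by intro a b ha hb H K h; simp only [Pi.mul_apply, map_mul, ha H K h, hb H K h]
  neg_mem' := by intro a ha H K h; simp only [Pi.neg_apply, map_neg, ha H K h]

/-- The canonical (multiplicative) map `G → Λ[[G]]`, `g ↦ [g]`. -/
noncomputable def cgrOf (g : G) : completedGroupRing Λ G :=
  ⟨fun H => MonoidAlgebra.of Λ (G ⧸ H.toSubgroup) (QuotientGroup.mk g), by
    intro H K h
    simp [cgrTrans, MonoidAlgebra.of_apply, Finsupp.mapDomain_single]⟩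

end CompletedGroupRing

section ZA

/-- `ℤ_A = ∏_{ℓ ∈ A} ℤ_ℓ`, for a set `A` of prime numbers. -/
def ZA (A : Set ℕ) (hA : ∀ ℓ ∈ A, Nat.Prime ℓ) : Type :=
  ∀ ℓ : A, @PadicInt ℓ.1 ⟨hA ℓ.1 ℓ.2⟩

noncomputable instance (A : Set ℕ) (hA : ∀ ℓ ∈ A, Nat.Prime ℓ) : AddCommGroup (ZA A hA) :=
  inferInstanceAs (AddCommGroup (∀ ℓ : A, @PadicInt ℓ.1 ⟨hA ℓ.1 ℓ.2⟩))

noncomputable instance (A : Set ℕ) (hA : ∀ ℓ ∈ A, Nat.Prime ℓ) : TopologicalSpace (ZA A hA) :=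
  inferInstanceAs (TopologicalSpace (∀ ℓ : A, @PadicInt ℓ.1 ⟨hA ℓ.1 ℓ.2⟩))

end ZA

open Finset MonoidAlgebra HopfAlgebra Filter Topology

section GeomSum

variable {B : Type*} {u v : B} {n : ℕ}

-- `hE` decomposes the identity along the powers of `u`, as the projection onto a set of coset
-- representatives does in a group algebra.
theorem eq_geom_sum_mul_of_mul_eq_self [Semiring B] {E : B →+ B} (hvu : v * u = 1)
    (hE : ∀ z, ∑ i ∈ range n, u ^ i * E (v ^ i * z) = z) {x : B} (hx : u * x = x) :
    x = (∑ i ∈ range n, u ^ i) * E x := by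
  have hvx : ∀ i, v ^ i * x = x := fun i => by
    induction i with
    | zero => rw [pow_zero, one_mul]
    | succ i ih => rw [pow_succ', mul_assoc, ih, ← hx, ← mul_assoc, hvu, one_mul, hx]
  conv_lhs => rw [← hE x]
  simp only [hvx, sum_mul]

theorem exists_sub_one_mul_eq_of_geom_sum_mul_eq_zero [Ring B] {E : B →+ B}
    (hE : ∀ z, ∑ i ∈ range n, u ^ i * E (v ^ i * z) = z) {y : B}
    (hy : (∑ i ∈ range n, v ^ i) * y = 0) : ∃ x, (u - 1) * x = y := by
  refine ⟨∑ i ∈ range n, (∑ j ∈ range i, u ^ j) * E (v ^ i * y), ?_⟩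
  calc (u - 1) * ∑ i ∈ range n, (∑ j ∈ range i, u ^ j) * E (v ^ i * y)
      = ∑ i ∈ range n, (u ^ i - 1) * E (v ^ i * y) := by
        rw [mul_sum]
        exact sum_congr rfl fun i _ => by rw [← mul_assoc, mul_geom_sum]
    _ = y - E ((∑ i ∈ range n, v ^ i) * y) := by
        simp only [sub_mul, one_mul, sum_sub_distrib, hE, sum_mul, map_sum]
    _ = y := by rw [hy, map_zero, sub_zero]

theorem sum_range_mul_pow_of_pow_eq_one [Semiring B] (hu : u ^ n = 1) (k : ℕ) :
    ∑ i ∈ range (k * n), u ^ i = k • ∑ i ∈ range n, u ^ i := by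
  induction k with
  | zero => simp
  | succ k ih =>
    rw [Nat.succ_mul, sum_range_add, ih, succ_nsmul]
    simp only [pow_add, pow_mul', hu, one_pow, one_mul]

end GeomSum

theorem IsOfFinOrder.sum_range_orderOf_pow {Q M : Type*} [Group Q] [AddCommMonoid M] {s : Q}
    (hs : IsOfFinOrder s) (f : Q → M) :
    ∑ i ∈ range (orderOf s), f (s ^ i) = ∑ᶠ c : Subgroup.zpowers s, f c := by
  rw [← finsum_comp_equiv (finEquivZPowers hs), finsum_eq_sum_of_fintype,
    ← Fin.sum_univ_eq_sum_range (fun i => f (s ^ i))]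
  rfl

namespace MonoidAlgebra

section RestrictCoeff

variable {Λ : Type*} [Semiring Λ] {Q : Type*}

open Classical in
noncomputable def restrictCoeff (T : Set Q) : MonoidAlgebra Λ Q →+ MonoidAlgebra Λ Q :=
  coeffAddEquiv.symm.toAddMonoidHom.comp
    ((Finsupp.filterAddHom (· ∈ T)).comp coeffAddEquiv.toAddMonoidHom)

theorem coeff_restrictCoeff (T : Set Q) (x : MonoidAlgebra Λ Q) (q : Q) :
    (restrictCoeff T x).coeff q = T.indicator x.coeff q := by
  classical
  simp only [restrictCoeff, AddEquiv.toAddMonoidHom_eq_coe, AddMonoidHom.coe_comp,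
    AddMonoidHom.coe_coe, Function.comp_apply, coeffAddEquiv_apply, coeffAddEquiv_symm_apply,
    Set.indicator_apply]
  rfl

end RestrictCoeff

section NormElement

variable (Λ : Type*) [CommRing Λ] {Q : Type*} [Group Q]

noncomputable def normElement (s : Q) : MonoidAlgebra Λ Q :=
  ∑ i ∈ range (orderOf s), of Λ Q s ^ i

variable {Λ}

theorem normElement_eq_finsum {s : Q} (hs : IsOfFinOrder s) :
    normElement Λ s = ∑ᶠ c : Subgroup.zpowers s, of Λ Q c := by
  simp only [normElement, ← map_pow]
  exact hs.sum_range_orderOf_pow (of Λ Q)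

theorem normElement_eq_of_zpowers_eq {s t : Q} (hs : IsOfFinOrder s) (ht : IsOfFinOrder t)
    (h : Subgroup.zpowers s = Subgroup.zpowers t) : normElement Λ s = normElement Λ t := by
  rw [normElement_eq_finsum hs, normElement_eq_finsum ht, h]

theorem normElement_inv {s : Q} (hs : IsOfFinOrder s) : normElement Λ s⁻¹ = normElement Λ s :=
  normElement_eq_of_zpowers_eq hs.inv hs Subgroup.zpowers_inv

theorem of_sub_one_mul_normElement (s : Q) : (of Λ Q s - 1) * normElement Λ s = 0 := by
  rw [normElement, mul_geom_sum, ← map_pow, pow_orderOf_eq_one, map_one, sub_self]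

theorem normElement_mul_of_sub_one (s : Q) : normElement Λ s * (of Λ Q s - 1) = 0 := by
  rw [normElement, geom_sum_mul, ← map_pow, pow_orderOf_eq_one, map_one, sub_self]

theorem normElement_conj {s : Q} (hs : IsOfFinOrder s) (hnormal : (Subgroup.zpowers s).Normal)
    (g : Q) : of Λ Q g * normElement Λ s * of Λ Q g⁻¹ = normElement Λ s := by
  have := hs.finite_zpowers.to_subtype
  rw [normElement_eq_finsum hs, mul_finsum' _ _ (Set.toFinite _), finsum_mul' _ _ (Set.toFinite _)]
  simp only [← map_mul]
  exact finsum_comp_equiv (MulAut.conjNormal (H := Subgroup.zpowers s) g).toEquiv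
    (f := fun c : Subgroup.zpowers s => of Λ Q c)

theorem normElement_mul_comm {s : Q} (hs : IsOfFinOrder s) (hnormal : (Subgroup.zpowers s).Normal)
    (x : MonoidAlgebra Λ Q) : normElement Λ s * x = x * normElement Λ s := by
  induction x using induction_linear with
  | zero => rw [mul_zero, zero_mul]
  | add x y hx hy => rw [mul_add, add_mul, hx, hy]
  | single g a =>
    rw [← smul_of, mul_smul_comm, smul_mul_assoc]
    conv_lhs => rw [← normElement_conj hs hnormal g]
    rw [mul_assoc, ← map_mul, inv_mul_cancel, map_one, mul_one]

theorem sum_of_pow_mul_restrictCoeff {s : Q} (hs : IsOfFinOrder s) {T : Set Q}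
    (hT : Subgroup.IsComplement (Subgroup.zpowers s : Set Q) T) (x : MonoidAlgebra Λ Q) :
    ∑ i ∈ range (orderOf s), of Λ Q s ^ i * restrictCoeff T (of Λ Q s⁻¹ ^ i * x) = x := by
  classical
  apply MonoidAlgebra.ext
  ext q
  have hterm : ∀ c : Q, (of Λ Q c * restrictCoeff T (of Λ Q c⁻¹ * x)).coeff q
      = T.indicator (fun _ => x.coeff q) (c⁻¹ * q) := fun c => by
    simp only [of_apply, coeff_single_mul_apply, one_mul, coeff_restrictCoeff, inv_inv,
      mul_inv_cancel_left, Set.indicator_apply]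
  simp only [coeff_sum, Finsupp.finsetSum_apply, ← map_pow, inv_pow, hterm]
  rw [hs.sum_range_orderOf_pow (fun c => T.indicator (fun _ => x.coeff q) (c⁻¹ * q))]
  obtain ⟨c₀, hc₀, huniq⟩ := Subgroup.isComplement_iff_existsUnique_inv_mul_mem.mp hT q
  refine (finsum_eq_single _ ⟨c₀, c₀.2⟩ fun c hc => ?_).trans (Set.indicator_of_mem hc₀ _)
  exact Set.indicator_of_notMem
    (fun h => hc (Subtype.ext (congrArg Subtype.val (huniq ⟨c, c.2⟩ h)))) _

theorem exists_eq_normElement_mul {s : Q} (hs : IsOfFinOrder s) {x : MonoidAlgebra Λ Q}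
    (hx : of Λ Q s * x = x) : ∃ y, x = normElement Λ s * y := by
  obtain ⟨T, hT, -⟩ := Subgroup.exists_isComplement_right (Subgroup.zpowers s) 1
  exact ⟨_, eq_geom_sum_mul_of_mul_eq_self (by rw [← map_mul, inv_mul_cancel, map_one])
    (sum_of_pow_mul_restrictCoeff hs hT) hx⟩

theorem exists_of_sub_one_mul_eq {s : Q} (hs : IsOfFinOrder s) {y : MonoidAlgebra Λ Q}
    (hy : normElement Λ s * y = 0) : ∃ x, (of Λ Q s - 1) * x = y := by
  obtain ⟨T, hT, -⟩ := Subgroup.exists_isComplement_right (Subgroup.zpowers s) 1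
  refine exists_sub_one_mul_eq_of_geom_sum_mul_eq_zero (sum_of_pow_mul_restrictCoeff hs hT) ?_
  rwa [← normElement_inv hs, normElement, orderOf_inv] at hy

theorem antipode_of (g : Q) : antipode Λ (of Λ Q g) = of Λ Q g⁻¹ := by
  simp

theorem antipode_antipode (x : MonoidAlgebra Λ Q) : antipode Λ (antipode Λ x) = x := by
  induction x using induction_linear with
  | zero => simp only [map_zero]
  | add x y hx hy => simp only [map_add, hx, hy]
  | single g a => simp

theorem antipode_normElement (s : Q) : antipode Λ (normElement Λ s) = normElement Λ s⁻¹ := by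
  simp only [normElement, map_sum, ← map_pow, antipode_of, inv_pow, orderOf_inv]

theorem exists_eq_mul_normElement {s : Q} (hs : IsOfFinOrder s) {x : MonoidAlgebra Λ Q}
    (hx : x * of Λ Q s = x) : ∃ y, x = y * normElement Λ s := by
  obtain ⟨y, hy⟩ := exists_eq_normElement_mul (x := antipode Λ x) hs.inv
    (by rw [← antipode_of, ← antipode_mul_antidistrib, hx])
  refine ⟨antipode Λ y, ?_⟩
  rw [← antipode_antipode x, hy, antipode_mul_antidistrib, antipode_normElement, inv_inv]

theorem exists_mul_of_sub_one_eq {s : Q} (hs : IsOfFinOrder s) {y : MonoidAlgebra Λ Q}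
    (hy : y * normElement Λ s = 0) : ∃ x, x * (of Λ Q s - 1) = y := by
  obtain ⟨x, hx⟩ := exists_of_sub_one_mul_eq (y := antipode Λ y) hs.inv
    (by rw [← antipode_normElement, ← antipode_mul_antidistrib, hy, map_zero])
  refine ⟨antipode Λ x, ?_⟩
  rw [← antipode_antipode y, ← hx, antipode_mul_antidistrib, map_sub, antipode_of, inv_inv,
    antipode_one]

theorem mapDomainRingHom_normElement {Q' : Type*} [Group Q'] (f : Q →* Q') (s : Q) :
    mapDomainRingHom Λ f (normElement Λ s) = (orderOf s / orderOf (f s)) • normElement Λ (f s) := by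
  have hof : ∀ i, mapDomainRingHom Λ f (of Λ Q s ^ i) = of Λ Q' (f s) ^ i := fun i => by
    simp [← map_pow]
  rw [normElement, map_sum]
  simp only [hof]
  conv_lhs => rw [← Nat.div_mul_cancel (orderOf_map_dvd f s)]
  exact sum_range_mul_pow_of_pow_eq_one (by rw [← map_pow, pow_orderOf_eq_one, map_one]) _

theorem mapDomainRingHom_normElement_eq_zero {Q' : Type*} [Group Q'] {m : ℕ} (hm : (m : Λ) = 0)
    (f : Q →* Q') {s : Q} (hdvd : m * orderOf (f s) ∣ orderOf s) :
    mapDomainRingHom Λ f (normElement Λ s) = 0 := by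
  obtain ⟨k, hk⟩ := Nat.dvd_div_of_mul_dvd (mul_comm m _ ▸ hdvd)
  rw [mapDomainRingHom_normElement f s, hk, mul_comm, mul_nsmul, ← Nat.cast_smul_eq_nsmul Λ m,
    hm, zero_smul]

end NormElement

end MonoidAlgebra

theorem PadicInt.isOpen_ker_toZModPow {p : ℕ} [Fact p.Prime] (n : ℕ) :
    IsOpen ((RingHom.ker (toZModPow n : ℤ_[p] →+* ZMod (p ^ n)) : Set ℤ_[p])) := by
  have : ((RingHom.ker (toZModPow n : ℤ_[p] →+* ZMod (p ^ n)) : Set ℤ_[p]))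
      = Metric.closedBall 0 ((p : ℝ) ^ (-n : ℤ)) := by
    ext x
    rw [SetLike.mem_coe, ker_toZModPow, ← norm_le_pow_iff_mem_span_pow, mem_closedBall_zero_iff]
  rw [this]
  exact IsUltrametricDist.isOpen_closedBall _
    (zpow_ne_zero _ (by exact_mod_cast (Fact.out : p.Prime).ne_zero))

theorem PadicInt.tendsto_pow_p_atTop_nhds_zero {p : ℕ} [Fact p.Prime] :
    Tendsto (fun n : ℕ => (p : ℤ_[p]) ^ n) atTop (𝓝 0) :=
  tendsto_pow_atTop_nhds_zero_of_norm_lt_one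
    (by rw [norm_p]; exact inv_lt_one_of_one_lt₀ (by exact_mod_cast (Fact.out : p.Prime).one_lt))

theorem ZMod.addOrderOf_natCast_pow {p : ℕ} (hp : 0 < p) (c : ℕ) :
    addOrderOf ((p ^ c : ℕ) : ZMod (p ^ (c + 1))) = p := by
  rw [ZMod.addOrderOf_coe _ (pow_pos hp _).ne', Nat.gcd_eq_right (pow_dvd_pow p c.le_succ),
    pow_succ, Nat.mul_div_cancel_left _ (pow_pos hp c)]

theorem Subgroup.orderOf_dvd_relIndex_ker_inf {N M : Type*} [Group N] [Group M] (φ : N →* M)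
    {V : Subgroup N} {x : N} (hx : x ∈ V) : orderOf (φ x) ∣ (φ.ker ⊓ V).relIndex V := by
  rw [Subgroup.inf_relIndex_right, Subgroup.relIndex_ker]
  exact Subgroup.orderOf_dvd_natCard _ ⟨x, hx, rfl⟩

theorem exists_isOpen_le_prime_dvd_relIndex {N : Type*} [Group N] [TopologicalSpace N]
    {A : Set ℕ} {hA : ∀ ℓ ∈ A, ℓ.Prime} (e : N ≃* Multiplicative (ZA A hA)) (he : Continuous e)
    (he' : Continuous e.symm) {ℓ : ℕ} (hℓ : ℓ ∈ A) (V : Subgroup N) (hV : IsOpen (V : Set N)) :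
    ∃ U : Subgroup N, IsOpen (U : Set N) ∧ U ≤ V ∧ ℓ ∣ U.relIndex V := by
  classical
  have hℓp : Fact ℓ.Prime := ⟨hA ℓ hℓ⟩
  let a : A := ⟨ℓ, hℓ⟩
  let single : ℤ_[ℓ] → ZA A hA := Pi.single (M := fun b : A => @PadicInt b.1 ⟨hA b.1 b.2⟩) a
  let ι : ℤ_[ℓ] → N := fun z => e.symm (Multiplicative.ofAdd (single z))
  have hι : Continuous ι := he'.comp (continuous_ofAdd.comp
    (continuous_single (A := fun b : A => @PadicInt b.1 ⟨hA b.1 b.2⟩) a))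
  -- Since `ι (ℓ ^ c) → 1`, some `ι (ℓ ^ c)` lies in `V`; reducing its `ℓ`-th coordinate
  -- modulo `ℓ ^ (c + 1)` gives an element of order `ℓ`.
  obtain ⟨c, hc⟩ : ∃ c : ℕ, ι ((ℓ : ℤ_[ℓ]) ^ c) ∈ V := by
    have h0 : ι 0 = 1 := by
      simp only [ι, single, Pi.single_zero]
      exact map_one e.symm
    exact ((hι.tendsto 0).comp PadicInt.tendsto_pow_p_atTop_nhds_zero).eventually
      (hV.mem_nhds (h0 ▸ V.one_mem)) |>.exists
  let reduce : ZA A hA →+ ZMod (ℓ ^ (c + 1)) := (PadicInt.toZModPow (c + 1)).toAddMonoidHom.comp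
    (Pi.evalAddMonoidHom (fun b : A => @PadicInt b.1 ⟨hA b.1 b.2⟩) a)
  let φ : N →* Multiplicative (ZMod (ℓ ^ (c + 1))) :=
    (AddMonoidHom.toMultiplicative reduce).comp e.toMonoidHom
  refine ⟨φ.ker ⊓ V, ?_, inf_le_right, ?_⟩
  · have hker : (φ.ker : Set N) = (fun x => Multiplicative.toAdd (e x) a) ⁻¹'
        (RingHom.ker (PadicInt.toZModPow (c + 1) : ℤ_[ℓ] →+* _)) := by
      ext x
      simp only [SetLike.mem_coe, MonoidHom.mem_ker, Set.mem_preimage, RingHom.mem_ker]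
      exact ofAdd_eq_one (A := ZMod (ℓ ^ (c + 1))) (x := reduce (Multiplicative.toAdd (e x)))
    have hkerOpen : IsOpen (φ.ker : Set N) :=
      hker ▸ (PadicInt.isOpen_ker_toZModPow (c + 1)).preimage
        ((continuous_apply a).comp (continuous_toAdd.comp he))
    exact hkerOpen.inter hV
  · have hval : φ (ι ((ℓ : ℤ_[ℓ]) ^ c)) =
        Multiplicative.ofAdd ((ℓ ^ c : ℕ) : ZMod (ℓ ^ (c + 1))) := by
      change Multiplicative.ofAdd (PadicInt.toZModPow (c + 1)
        (Multiplicative.toAdd (e (e.symm (Multiplicative.ofAdd (single _)))) a)) = _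
      rw [MulEquiv.apply_symm_apply, toAdd_ofAdd]
      change Multiplicative.ofAdd (PadicInt.toZModPow (c + 1)
        (Pi.single (M := fun b : A => @PadicInt b.1 ⟨hA b.1 b.2⟩) a ((ℓ : ℤ_[ℓ]) ^ c) a)) = _
      rw [Pi.single_eq_same, map_pow, map_natCast, Nat.cast_pow]
    have horder : orderOf (φ (ι ((ℓ : ℤ_[ℓ]) ^ c))) = ℓ := by
      rw [hval, orderOf_ofAdd_eq_addOrderOf, ZMod.addOrderOf_natCast_pow hℓp.out.pos]
    exact (dvd_of_eq horder.symm).trans (Subgroup.orderOf_dvd_relIndex_ker_inf φ hc)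

theorem exists_isOpen_le_dvd_relIndex {N : Type*} [Group N] [TopologicalSpace N] {m : ℕ}
    (hm : m ≠ 0)
    (hprime : ∀ p : ℕ, p.Prime → p ∣ m → ∀ V : Subgroup N, IsOpen (V : Set N) →
      ∃ U : Subgroup N, IsOpen (U : Set N) ∧ U ≤ V ∧ p ∣ U.relIndex V)
    (V : Subgroup N) (hV : IsOpen (V : Set N)) :
    ∃ U : Subgroup N, IsOpen (U : Set N) ∧ U ≤ V ∧ m ∣ U.relIndex V := by
  induction m using Nat.recOnMul generalizing V with
  | zero => exact absurd rfl hm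
  | one => exact ⟨V, hV, le_rfl, one_dvd _⟩
  | prime p hp => exact hprime p hp dvd_rfl V hV
  | mul a b iha ihb =>
    obtain ⟨ha, hb⟩ := mul_ne_zero_iff.mp hm
    obtain ⟨U₁, hU₁, hU₁V, haU₁⟩ := iha ha (fun p hp hpa => hprime p hp (hpa.mul_right b)) V hV
    obtain ⟨U₂, hU₂, hU₂U₁, hbU₂⟩ := ihb hb (fun p hp hpb => hprime p hp (hpb.mul_left a)) U₁ hU₁
    refine ⟨U₂, hU₂, hU₂U₁.trans hU₁V, ?_⟩
    rw [← Subgroup.relIndex_mul_relIndex U₂ U₁ V hU₂U₁ hU₁V, mul_comm a]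
    exact mul_dvd_mul hbU₂ haU₁

/-- `m ^ ∞` divides the supernatural order of `g`. -/
def PowInftyDvdOrder {G : Type*} [Group G] [TopologicalSpace G] (m : ℕ) (g : G) : Prop :=
  ∀ H : OpenNormalSubgroup G, ∃ H' : OpenNormalSubgroup G, H'.toSubgroup ≤ H.toSubgroup ∧
    m * orderOf (g : G ⧸ H.toSubgroup) ∣ orderOf (g : G ⧸ H'.toSubgroup)

section TopologicalGenerator

variable {G : Type*} [Group G] [TopologicalSpace G] [IsTopologicalGroup G] {N : Subgroup G}
  {σ : G}

theorem map_mk'_eq_zpowers_of_closure_zpowers_eq (hσN : σ ∈ N)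
    (hσgen : closure (Subgroup.zpowers σ : Set G) = N) (H : OpenNormalSubgroup G) :
    N.map (QuotientGroup.mk' H.toSubgroup) = Subgroup.zpowers (σ : G ⧸ H.toSubgroup) := by
  refine le_antisymm ?_ (Subgroup.zpowers_le.mpr ⟨σ, hσN, rfl⟩)
  rw [Subgroup.map_le_iff_le_comap]
  set S := (Subgroup.zpowers (σ : G ⧸ H.toSubgroup)).comap (QuotientGroup.mk' H.toSubgroup)
  have hHS : H.toSubgroup ≤ S := fun h hh => by
    simp [S, (QuotientGroup.eq_one_iff h).mpr hh]
  have hS : IsClosed (S : Set G) := S.isClosed_of_isOpen (Subgroup.isOpen_mono hHS H.isOpen')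
  have hσS : Subgroup.zpowers σ ≤ S := Subgroup.zpowers_le.mpr (Subgroup.mem_zpowers _)
  intro x hx
  rw [← SetLike.mem_coe, ← hσgen] at hx
  exact closure_minimal hσS hS hx

theorem normal_zpowers_mk_of_closure_zpowers_eq [N.Normal] (hσN : σ ∈ N)
    (hσgen : closure (Subgroup.zpowers σ : Set G) = N) (H : OpenNormalSubgroup G) :
    (Subgroup.zpowers (σ : G ⧸ H.toSubgroup)).Normal := by
  rw [← map_mk'_eq_zpowers_of_closure_zpowers_eq hσN hσgen H]
  exact Subgroup.Normal.map inferInstance _ (QuotientGroup.mk'_surjective _)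

theorem orderOf_mk_eq_relIndex (hσN : σ ∈ N)
    (hσgen : closure (Subgroup.zpowers σ : Set G) = N) (H : OpenNormalSubgroup G) :
    orderOf (σ : G ⧸ H.toSubgroup) = H.toSubgroup.relIndex N := by
  rw [← Nat.card_zpowers, ← map_mk'_eq_zpowers_of_closure_zpowers_eq hσN hσgen H,
    ← Subgroup.relIndex_ker, QuotientGroup.ker_mk']

theorem powInftyDvdOrder_of_closure_zpowers_eq [CompactSpace G] [TotallyDisconnectedSpace G]
    {m : ℕ} (hσN : σ ∈ N) (hσgen : closure (Subgroup.zpowers σ : Set G) = N)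
    (hN : ∀ V : Subgroup N, IsOpen (V : Set N) →
      ∃ U : Subgroup N, IsOpen (U : Set N) ∧ U ≤ V ∧ m ∣ U.relIndex V) :
    PowInftyDvdOrder m σ := by
  intro H
  let V := H.toSubgroup.subgroupOf N
  obtain ⟨U, hU, hUV, hmU⟩ := hN V (H.isOpen'.preimage continuous_subtype_val)
  obtain ⟨W, hW, hWU⟩ := isOpen_induced_iff.mp hU
  obtain ⟨H', hH'⟩ := ProfiniteGrp.exist_openNormalSubgroup_sub_open_nhds_of_one
    (hW.inter H.isOpen') ⟨(hWU ▸ U.one_mem : (1 : N) ∈ Subtype.val ⁻¹' W), H.one_mem⟩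
  refine ⟨H', fun x hx => (hH' hx).2, ?_⟩
  rw [orderOf_mk_eq_relIndex hσN hσgen, orderOf_mk_eq_relIndex hσN hσgen]
  calc m * H.toSubgroup.relIndex N ∣ U.relIndex V * V.index := mul_dvd_mul_right hmU _
    _ = U.index := Subgroup.relIndex_mul_index hUV
    _ ∣ H'.toSubgroup.relIndex N := Subgroup.index_dvd_of_le fun x hx => by
        rw [← SetLike.mem_coe, ← hWU]
        exact (hH' hx).1

end TopologicalGenerator

section Transition

variable {Λ : Type*} [CommRing Λ] {G : Type*} [Group G] [TopologicalSpace G]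

theorem cgrTrans_of {H K : OpenNormalSubgroup G} (h : H.toSubgroup ≤ K.toSubgroup) (g : G) :
    cgrTrans Λ G h (of Λ _ (g : G ⧸ H.toSubgroup)) = of Λ _ (g : G ⧸ K.toSubgroup) := by
  simp [cgrTrans]

theorem cgrTrans_cgrTrans {H K L : OpenNormalSubgroup G} (h₁ : H.toSubgroup ≤ K.toSubgroup)
    (h₂ : K.toSubgroup ≤ L.toSubgroup) (v : MonoidAlgebra Λ (G ⧸ H.toSubgroup)) :
    cgrTrans Λ G h₂ (cgrTrans Λ G h₁ v) = cgrTrans Λ G (h₁.trans h₂) v := by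
  induction v using MonoidAlgebra.induction_linear with
  | zero => simp only [map_zero]
  | add v w hv hw => simp only [map_add, hv, hw]
  | single q a =>
    obtain ⟨g, rfl⟩ := QuotientGroup.mk_surjective q
    simp [cgrTrans]

theorem cgrTrans_normElement_eq_zero {m : ℕ} (hm : (m : Λ) = 0) {σ : G}
    {H H' : OpenNormalSubgroup G} (h : H'.toSubgroup ≤ H.toSubgroup)
    (hdvd : m * orderOf (σ : G ⧸ H.toSubgroup) ∣ orderOf (σ : G ⧸ H'.toSubgroup)) :
    cgrTrans Λ G h (normElement Λ (σ : G ⧸ H'.toSubgroup)) = 0 :=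
  mapDomainRingHom_normElement_eq_zero hm _ hdvd

end Transition

namespace completedGroupRing

section Patching

variable {Λ : Type*} [CommRing Λ] {G : Type*} [Group G] [TopologicalSpace G]
  (f : ∀ H : OpenNormalSubgroup G,
    MonoidAlgebra Λ (G ⧸ H.toSubgroup) →+ MonoidAlgebra Λ (G ⧸ H.toSubgroup))

def HasEssentiallyZeroKernels : Prop :=
  ∀ H : OpenNormalSubgroup G, ∃ (H' : OpenNormalSubgroup G) (h : H'.toSubgroup ≤ H.toSubgroup),
    ∀ v, f H' v = 0 → cgrTrans Λ G h v = 0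

variable {f}

theorem eq_zero_of_forall_map_eq_zero
    (hker : HasEssentiallyZeroKernels f)
    {r : completedGroupRing Λ G} (hr : ∀ H, f H (r.1 H) = 0) : r = 0 := by
  refine Subtype.ext (funext fun H => ?_)
  obtain ⟨H', h, hH'⟩ := hker H
  rw [← r.2 H' H h]
  exact hH' _ (hr H')

theorem exists_forall_map_eq
    (hf : ∀ {H K : OpenNormalSubgroup G} (h : H.toSubgroup ≤ K.toSubgroup) v,
      cgrTrans Λ G h (f H v) = f K (cgrTrans Λ G h v))
    (hker : HasEssentiallyZeroKernels f)
    {y : completedGroupRing Λ G} (hy : ∀ H, ∃ v, f H v = y.1 H) :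
    ∃ x : completedGroupRing Λ G, ∀ H, f H (x.1 H) = y.1 H := by
  choose D hD hDker using hker
  choose sol hsol using fun H => hy (D H)
  have agree : ∀ {H K : OpenNormalSubgroup G} (h : H.toSubgroup ≤ K.toSubgroup) {a b},
      f (D H) a = f (D H) b →
        cgrTrans Λ G ((hD H).trans h) a = cgrTrans Λ G ((hD H).trans h) b := by
    intro H K h a b hab
    rw [← cgrTrans_cgrTrans (hD H) h, ← cgrTrans_cgrTrans (hD H) h, ← sub_eq_zero, ← map_sub,
      ← map_sub, hDker H _ (by rw [map_sub, hab, sub_self]), map_zero]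
  have hlift : ∀ {H K : OpenNormalSubgroup G} (h : (D H).toSubgroup ≤ K.toSubgroup),
      f K (cgrTrans Λ G h (sol H)) = y.1 K := fun h => by
    rw [← hf, hsol, y.2]
  let x : ∀ H : OpenNormalSubgroup G, MonoidAlgebra Λ (G ⧸ H.toSubgroup) :=
    fun H => cgrTrans Λ G (hD H) (sol H)
  have hcompat : ∀ H K (h : H.toSubgroup ≤ K.toSubgroup), cgrTrans Λ G h (x H) = x K := by
    intro H K h
    let P := D H ⊓ D K
    have hPH : (D P).toSubgroup ≤ (D H).toSubgroup := (hD P).trans inf_le_left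
    have hPK : (D P).toSubgroup ≤ (D K).toSubgroup := (hD P).trans inf_le_right
    calc cgrTrans Λ G h (x H) = cgrTrans Λ G ((hD H).trans h) (sol H) := cgrTrans_cgrTrans _ _ _
      _ = cgrTrans Λ G ((hD H).trans h) (cgrTrans Λ G hPH (sol P)) :=
        agree h (by rw [hsol, hlift])
      _ = cgrTrans Λ G ((hD K).trans le_rfl) (cgrTrans Λ G hPK (sol P)) := by
        rw [cgrTrans_cgrTrans, cgrTrans_cgrTrans]
      _ = cgrTrans Λ G ((hD K).trans le_rfl) (sol K) := agree le_rfl (by rw [hsol, hlift])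
  exact ⟨⟨x, hcompat⟩, fun H => hlift (hD H)⟩

end Patching

variable {Λ : Type*} [CommRing Λ] {G : Type*} [Group G] [TopologicalSpace G]

theorem apply_sub_one_mul (σ : G) (r : completedGroupRing Λ G) (H : OpenNormalSubgroup G) :
    ((cgrOf Λ G σ - 1) * r).1 H = (of Λ _ (σ : G ⧸ H.toSubgroup) - 1) * r.1 H :=
  rfl

theorem apply_mul_sub_one (σ : G) (r : completedGroupRing Λ G) (H : OpenNormalSubgroup G) :
    (r * (cgrOf Λ G σ - 1)).1 H = r.1 H * (of Λ _ (σ : G ⧸ H.toSubgroup) - 1) :=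
  rfl

variable [IsTopologicalGroup G] [CompactSpace G] {m : ℕ} (hm : (m : Λ) = 0) {σ : G}
  (hσ : PowInftyDvdOrder m σ)
include hm hσ

theorem hasEssentiallyZeroKernels_mulLeft_sub_one :
    HasEssentiallyZeroKernels fun H : OpenNormalSubgroup G =>
      AddMonoidHom.mulLeft (of Λ _ (σ : G ⧸ H.toSubgroup) - 1) := by
  intro H
  obtain ⟨H', h, hdvd⟩ := hσ H
  refine ⟨H', h, fun v hv => ?_⟩
  rw [AddMonoidHom.coe_mulLeft, sub_mul, one_mul, sub_eq_zero] at hv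
  obtain ⟨w, rfl⟩ := exists_eq_normElement_mul (isOfFinOrder_of_finite _) hv
  rw [map_mul, cgrTrans_normElement_eq_zero hm h hdvd, zero_mul]

theorem hasEssentiallyZeroKernels_mulRight_sub_one :
    HasEssentiallyZeroKernels fun H : OpenNormalSubgroup G =>
      AddMonoidHom.mulRight (of Λ _ (σ : G ⧸ H.toSubgroup) - 1) := by
  intro H
  obtain ⟨H', h, hdvd⟩ := hσ H
  refine ⟨H', h, fun v hv => ?_⟩
  rw [AddMonoidHom.mulRight_apply, mul_sub, mul_one, sub_eq_zero] at hv
  obtain ⟨w, rfl⟩ := exists_eq_mul_normElement (isOfFinOrder_of_finite _) hv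
  rw [map_mul, cgrTrans_normElement_eq_zero hm h hdvd, mul_zero]

theorem eq_zero_of_sub_one_mul_eq_zero {r : completedGroupRing Λ G}
    (hr : (cgrOf Λ G σ - 1) * r = 0) : r = 0 :=
  eq_zero_of_forall_map_eq_zero (hasEssentiallyZeroKernels_mulLeft_sub_one hm hσ)
    fun H => congrArg (·.1 H) hr

theorem eq_zero_of_mul_sub_one_eq_zero {r : completedGroupRing Λ G}
    (hr : r * (cgrOf Λ G σ - 1) = 0) : r = 0 :=
  eq_zero_of_forall_map_eq_zero (hasEssentiallyZeroKernels_mulRight_sub_one hm hσ)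
    fun H => congrArg (·.1 H) hr

theorem exists_sub_one_mul_eq {y : completedGroupRing Λ G}
    (hy : ∀ H : OpenNormalSubgroup G, normElement Λ (σ : G ⧸ H.toSubgroup) * y.1 H = 0) :
    ∃ x, (cgrOf Λ G σ - 1) * x = y := by
  obtain ⟨x, hx⟩ := exists_forall_map_eq
    (fun h v => by simp only [AddMonoidHom.coe_mulLeft, map_mul, map_sub, map_one, cgrTrans_of])
    (hasEssentiallyZeroKernels_mulLeft_sub_one hm hσ)
    (fun H => exists_of_sub_one_mul_eq (isOfFinOrder_of_finite (σ : G ⧸ H.toSubgroup)) (hy H))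
  exact ⟨x, Subtype.ext (funext hx)⟩

theorem exists_mul_sub_one_eq {y : completedGroupRing Λ G}
    (hy : ∀ H : OpenNormalSubgroup G, y.1 H * normElement Λ (σ : G ⧸ H.toSubgroup) = 0) :
    ∃ x, x * (cgrOf Λ G σ - 1) = y := by
  obtain ⟨x, hx⟩ := exists_forall_map_eq
    (fun h v => by simp only [AddMonoidHom.coe_mulRight, map_mul, map_sub, map_one, cgrTrans_of])
    (hasEssentiallyZeroKernels_mulRight_sub_one hm hσ)
    (fun H => exists_mul_of_sub_one_eq (isOfFinOrder_of_finite (σ : G ⧸ H.toSubgroup)) (hy H))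
  exact ⟨x, Subtype.ext (funext hx)⟩

theorem range_sub_one_mul_eq_range_mul_sub_one
    (hnormal : ∀ H : OpenNormalSubgroup G, (Subgroup.zpowers (σ : G ⧸ H.toSubgroup)).Normal) :
    Set.range (fun r : completedGroupRing Λ G => (cgrOf Λ G σ - 1) * r) =
      Set.range (fun r : completedGroupRing Λ G => r * (cgrOf Λ G σ - 1)) := by
  ext y
  constructor
  · rintro ⟨r, rfl⟩
    refine exists_mul_sub_one_eq hm hσ fun H => ?_
    rw [apply_sub_one_mul, mul_assoc,
      ← normElement_mul_comm (isOfFinOrder_of_finite _) (hnormal H), ← mul_assoc,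
      of_sub_one_mul_normElement, zero_mul]
  · rintro ⟨r, rfl⟩
    refine exists_sub_one_mul_eq hm hσ fun H => ?_
    rw [apply_mul_sub_one, ← mul_assoc,
      normElement_mul_comm (isOfFinOrder_of_finite _) (hnormal H), mul_assoc,
      normElement_mul_of_sub_one, mul_zero]

theorem range_sub_one_mul_subset_of_normElement_eq {σ' : G}
    (hν : ∀ H : OpenNormalSubgroup G,
      normElement Λ (σ' : G ⧸ H.toSubgroup) = normElement Λ (σ : G ⧸ H.toSubgroup)) :
    Set.range (fun r : completedGroupRing Λ G => (cgrOf Λ G σ' - 1) * r) ⊆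
      Set.range (fun r : completedGroupRing Λ G => (cgrOf Λ G σ - 1) * r) := by
  rintro _ ⟨r, rfl⟩
  refine exists_sub_one_mul_eq hm hσ fun H => ?_
  rw [apply_sub_one_mul, ← hν, ← mul_assoc, normElement_mul_of_sub_one, zero_mul]

end completedGroupRing

open completedGroupRing

theorem stmt5_general (Λ : Type*) [CommRing Λ] (m : ℕ) (hm : 0 < m) (hmΛ : (m : Λ) = 0)
    (A : Set ℕ) (hA : ∀ ℓ ∈ A, Nat.Prime ℓ) (hAm : ∀ ℓ : ℕ, ℓ.Prime → ℓ ∣ m → ℓ ∈ A)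
    (G : Type*) [Group G] [TopologicalSpace G] [IsTopologicalGroup G]
    [CompactSpace G] [TotallyDisconnectedSpace G]
    (N : Subgroup G) [N.Normal]
    (e : N ≃* Multiplicative (ZA A hA)) (he : Continuous e) (he' : Continuous e.symm)
    (σ : G) (hσN : σ ∈ N)
    (hσgen : closure ((Subgroup.zpowers σ : Subgroup G) : Set G) = (N : Set G)) :
    -- (i) `t = [σ] - 1` is a non-zero-divisor (on both sides)
    (∀ r : completedGroupRing Λ G, (cgrOf Λ G σ - 1) * r = 0 → r = 0) ∧
    (∀ r : completedGroupRing Λ G, r * (cgrOf Λ G σ - 1) = 0 → r = 0) ∧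
    -- (ii) `tR = Rt`
    (Set.range (fun r : completedGroupRing Λ G => (cgrOf Λ G σ - 1) * r) =
      Set.range (fun r : completedGroupRing Λ G => r * (cgrOf Λ G σ - 1))) ∧
    -- (iii) `tR` does not depend on the choice of topological generator of `N`
    (∀ σ' : G, σ' ∈ N →
      closure ((Subgroup.zpowers σ' : Subgroup G) : Set G) = (N : Set G) →
      Set.range (fun r : completedGroupRing Λ G => (cgrOf Λ G σ' - 1) * r) =
        Set.range (fun r : completedGroupRing Λ G => (cgrOf Λ G σ - 1) * r)) := by
  have hN : ∀ V : Subgroup N, IsOpen (V : Set N) →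
      ∃ U : Subgroup N, IsOpen (U : Set N) ∧ U ≤ V ∧ m ∣ U.relIndex V :=
    exists_isOpen_le_dvd_relIndex hm.ne' fun p hp hpm =>
      exists_isOpen_le_prime_dvd_relIndex e he he' (hAm p hp hpm)
  have hgen : ∀ τ ∈ N, closure (Subgroup.zpowers τ : Set G) = N → PowInftyDvdOrder m τ :=
    fun τ hτN hτgen => powInftyDvdOrder_of_closure_zpowers_eq hτN hτgen hN
  have hσ := hgen σ hσN hσgen
  refine ⟨fun r => eq_zero_of_sub_one_mul_eq_zero hmΛ hσ,
    fun r => eq_zero_of_mul_sub_one_eq_zero hmΛ hσ,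
    range_sub_one_mul_eq_range_mul_sub_one hmΛ hσ
      (normal_zpowers_mk_of_closure_zpowers_eq hσN hσgen), fun σ' hσ'N hσ'gen => ?_⟩
  have hν : ∀ H : OpenNormalSubgroup G, normElement Λ (σ' : G ⧸ H.toSubgroup) =
      normElement Λ (σ : G ⧸ H.toSubgroup) := fun H =>
    normElement_eq_of_zpowers_eq (isOfFinOrder_of_finite _) (isOfFinOrder_of_finite _) <| by
      rw [← map_mk'_eq_zpowers_of_closure_zpowers_eq hσ'N hσ'gen,
        ← map_mk'_eq_zpowers_of_closure_zpowers_eq hσN hσgen]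
  exact (range_sub_one_mul_subset_of_normElement_eq hmΛ hσ hν).antisymm
    (range_sub_one_mul_subset_of_normElement_eq hmΛ (hgen σ' hσ'N hσ'gen) fun H => (hν H).symm)

/-- Let `Λ` be a commutative ring with `mΛ = 0` for some `m > 0`, let
`A` be a set of primes containing all prime divisors of `m`, and let `G` be a profinite
group with a closed normal subgroup `N` isomorphic, as a topological group, to
`ℤ_A = ∏_{ℓ ∈ A} ℤ_ℓ`. Let `σ` be a topological generator of `N`, `R = Λ[[G]]` the
completed group ring, and `t = [σ] - 1 ∈ R`. Then: (i) `t` is a non-zero-divisor in `R`;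
(ii) `tR = Rt`; and (iii) `([σ'] - 1)R = tR` for any other topological generator `σ'`
of `N`. -/
theorem stmt5 (Λ : Type*) [CommRing Λ] (m : ℕ) (hm : 0 < m) (hmΛ : (m : Λ) = 0)
    (A : Set ℕ) (hA : ∀ ℓ ∈ A, Nat.Prime ℓ) (hAm : ∀ ℓ : ℕ, ℓ.Prime → ℓ ∣ m → ℓ ∈ A)
    (G : Type*) [Group G] [TopologicalSpace G] [IsTopologicalGroup G]
    [CompactSpace G] [T2Space G] [TotallyDisconnectedSpace G]
    (N : Subgroup G) [N.Normal] (hNclosed : IsClosed (N : Set G))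
    (e : N ≃* Multiplicative (ZA A hA)) (he : Continuous e) (he' : Continuous e.symm)
    (σ : G) (hσN : σ ∈ N)
    (hσgen : closure ((Subgroup.zpowers σ : Subgroup G) : Set G) = (N : Set G)) :
    -- (i) `t = [σ] - 1` is a non-zero-divisor (on both sides)
    (∀ r : completedGroupRing Λ G, (cgrOf Λ G σ - 1) * r = 0 → r = 0) ∧
    (∀ r : completedGroupRing Λ G, r * (cgrOf Λ G σ - 1) = 0 → r = 0) ∧
    -- (ii) `tR = Rt`
    (Set.range (fun r : completedGroupRing Λ G => (cgrOf Λ G σ - 1) * r) =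
      Set.range (fun r : completedGroupRing Λ G => r * (cgrOf Λ G σ - 1))) ∧
    -- (iii) `tR` does not depend on the choice of topological generator of `N`
    (∀ σ' : G, σ' ∈ N →
      closure ((Subgroup.zpowers σ' : Subgroup G) : Set G) = (N : Set G) →
      Set.range (fun r : completedGroupRing Λ G => (cgrOf Λ G σ' - 1) * r) =
        Set.range (fun r : completedGroupRing Λ G => (cgrOf Λ G σ - 1) * r)) :=
  stmt5_general Λ m hm hmΛ A hA hAm G N e he he' σ hσN hσgen
end
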